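/- Let k_0 ≥ 1 and set n = k_0 + 1. Let X_0 be an n×k_0 real matrix of rank k_0, and for indices i, j let X_i (n×k_i) and X_j (n×k_j) be real design matrices, and let h_i : ℝ^{k_i} → [0,∞) and h_j : ℝ^{k_j} → [0,∞) be probability densities that are symmetric about the origin (h(−u) = h(u)). For each index l define the marginal likelihood m_l(y) = ∫_0^∞ ∫_{ℝ^{k_0}} ∫_{ℝ^{k_l}} N_n(y | X_0 β_0 + X_l β, σ² I_n) · σ^{−1−k_l} h_l(β/σ) dβ dβ_0 dσ, and define m_0(y) = ∫_0^∞ ∫_{ℝ^{k_0}} N_n(y | X_0 β_0, σ² I_n) · σ^{−1} dβ_0 dσ. Then for every y ∈ ℝⁿ not lying in the column space of X_0, m_i(y) = m_j(y) = m_0(y), all being finite. -/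

import Mathlib

open MeasureTheory Filter Topology Real Matrix ENNReal

/-- The multivariate normal density `N_n(y | μ, σ² I_n)` on `ℝⁿ`. -/
noncomputable def isoNormalDensity {n : ℕ} (y μ : Fin n → ℝ) (σ : ℝ) : ℝ :=
  (2 * Real.pi * σ ^ 2) ^ (-(n : ℝ) / 2) *
    Real.exp (-(∑ j, (y j - μ j) ^ 2) / (2 * σ ^ 2))

/-- Marginal likelihood of a model with extra regressors `Xl` under the prior
`π(β₀, β, σ) = σ^{-1-k_l} h_l(β/σ)`. -/
noncomputable def marginalLikelihood {n k0 kl : ℕ}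
    (X0 : Matrix (Fin n) (Fin k0) ℝ) (Xl : Matrix (Fin n) (Fin kl) ℝ)
    (h : (Fin kl → ℝ) → ℝ) (y : Fin n → ℝ) : ℝ≥0∞ :=
  ∫⁻ σ in Set.Ioi (0:ℝ), ∫⁻ β0 : Fin k0 → ℝ, ∫⁻ β : Fin kl → ℝ,
    ENNReal.ofReal
      (isoNormalDensity y (X0 *ᵥ β0 + Xl *ᵥ β) σ *
        (σ ^ (-(1 : ℝ) - (kl : ℝ)) * h (σ⁻¹ • β)))

/-- Marginal likelihood of the null model under the right-Haar prior `σ⁻¹`. -/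
noncomputable def nullMarginalLikelihood {n k0 : ℕ}
    (X0 : Matrix (Fin n) (Fin k0) ℝ) (y : Fin n → ℝ) : ℝ≥0∞ :=
  ∫⁻ σ in Set.Ioi (0:ℝ), ∫⁻ β0 : Fin k0 → ℝ,
    ENNReal.ofReal (isoNormalDensity y (X0 *ᵥ β0) σ * σ⁻¹)


/-!
Since `X₀` has rank `k₀` in `ℝ^(k₀+1)`, its column space is the hyperplane orthogonal to a unit
vector `w`. Integrating out `β₀` therefore leaves a single Gaussian coordinate: the `β₀`-integral of
`exp(-‖c - X₀ β₀‖² / (2σ²))` is `σ^k₀ · J · exp(-(w ⬝ᵥ c)² / (2σ²))`, with `J = gaussianMass X₀`.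
After the substitution `β = σ u` the powers of `σ` collapse to `σ⁻²`, and the substitution
`s = |a| / σ` turns the `σ`-integral into `|a|⁻¹ Φ(± t u)`, where `a = w ⬝ᵥ y`,
`t u = w ⬝ᵥ X_l u` and `Φ c = gaussianTail c` is the unnormalised Gaussian mass of `(0, ∞)`
centred at `c`. Since `t` is odd and `h_l` is even, averaging `u` with `-u` and using
`Φ c + Φ (-c) = √(2π)` gives `∫ h_l(u) Φ(± t u) du = √(2π) / 2`, whatever `X_l` and `h_l` are.
The null model is the case `k_l = 0`, `h_l = 1`.
-/

open Set

section Scaling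

variable {E : Type*} [NormedAddCommGroup E] [NormedSpace ℝ E] [MeasurableSpace E] [BorelSpace E]
  [FiniteDimensional ℝ E] (μ : Measure E) [μ.IsAddHaarMeasure]

theorem lintegral_comp_inv_smul_of_pos (f : E → ℝ≥0∞) {r : ℝ} (hr : 0 < r) :
    ∫⁻ x, f (r⁻¹ • x) ∂μ = ENNReal.ofReal (r ^ Module.finrank ℝ E) * ∫⁻ x, f x ∂μ := by
  calc ∫⁻ x, f (r⁻¹ • x) ∂μ = ∫⁻ x, f x ∂Measure.map (r⁻¹ • ·) μ :=
        (lintegral_map_equiv f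
          (Homeomorph.smulOfNeZero r⁻¹ (inv_ne_zero hr.ne')).toMeasurableEquiv).symm
    _ = _ := by
      rw [Measure.map_addHaar_smul μ (inv_ne_zero hr.ne'), lintegral_smul_measure, inv_pow, inv_inv,
        abs_of_pos (pow_pos hr _), smul_eq_mul]

end Scaling

noncomputable def gaussianTail (c : ℝ) : ℝ≥0∞ :=
  ∫⁻ t in Ioi 0, ENNReal.ofReal (exp (-(t - c) ^ 2 / 2))

theorem measurable_gaussianTail : Measurable gaussianTail :=
  Measurable.lintegral_prod_right'
    (f := fun p : ℝ × ℝ => ENNReal.ofReal (exp (-(p.2 - p.1) ^ 2 / 2))) (by fun_prop)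

theorem lintegral_exp_neg_sq_sub_div_two (c : ℝ) :
    ∫⁻ t, ENNReal.ofReal (exp (-(t - c) ^ 2 / 2)) = ENNReal.ofReal (√(2 * π)) := by
  have hform : (fun t : ℝ => exp (-t ^ 2 / 2)) = fun t => exp (-(1 / 2) * t ^ 2) := by
    ext; ring_nf
  rw [lintegral_sub_right_eq_self (fun t => ENNReal.ofReal (exp (-t ^ 2 / 2))) c,
    ← ofReal_integral_eq_lintegral_ofReal _ (ae_of_all _ fun t => (exp_pos _).le), hform,
    integral_gaussian]
  · norm_num [div_div_eq_mul_div, mul_comm]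
  · exact hform ▸ integrable_exp_neg_mul_sq (by norm_num)

theorem gaussianTail_add_gaussianTail_neg (c : ℝ) :
    gaussianTail c + gaussianTail (-c) = ENNReal.ofReal (√(2 * π)) := by
  have hreflect : gaussianTail (-c) = ∫⁻ t in Iio 0, ENNReal.ofReal (exp (-(t - c) ^ 2 / 2)) := by
    rw [← (Measure.measurePreserving_neg (volume : Measure ℝ)).setLIntegral_comp_preimage_emb
      (Homeomorph.neg ℝ).measurableEmbedding, show Neg.neg ⁻¹' Iio (0 : ℝ) = Ioi 0 by ext; simp,
      gaussianTail]
    congr with t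
    ring_nf
  rw [hreflect, gaussianTail, setLIntegral_congr Ioi_ae_eq_Ici, ← compl_Iio, add_comm,
    lintegral_add_compl _ measurableSet_Iio, lintegral_exp_neg_sq_sub_div_two]

theorem setLIntegral_Ioi_inv_sq_mul_exp {a : ℝ} (ha : a ≠ 0) (c : ℝ) :
    ∫⁻ σ in Ioi 0, ENNReal.ofReal (σ⁻¹ ^ 2 * exp (-(a / σ - c) ^ 2 / 2)) =
      ENNReal.ofReal |a|⁻¹ * gaussianTail (SignType.sign a * c) := by
  have habs : 0 < |a| := abs_pos.mpr ha
  have himage : (fun σ : ℝ => |a| * σ⁻¹) '' Ioi 0 = Ioi 0 := by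
    ext t
    constructor
    · rintro ⟨σ, hσ, rfl⟩
      exact mul_pos habs (inv_pos.mpr hσ)
    · intro ht
      exact ⟨|a| * t⁻¹, mul_pos habs (inv_pos.mpr ht), by field_simp [(mem_Ioi.mp ht).ne']⟩
  have hderiv : ∀ σ ∈ Ioi (0 : ℝ),
      HasDerivWithinAt (fun σ => |a| * σ⁻¹) (|a| * -(σ ^ 2)⁻¹) (Ioi 0) σ :=
    fun σ hσ => ((hasDerivAt_inv (mem_Ioi.mp hσ).ne').const_mul |a|).hasDerivWithinAt
  have hinj : InjOn (fun σ : ℝ => |a| * σ⁻¹) (Ioi 0) := fun x _ y _ hxy =>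
    inv_injective (mul_left_cancel₀ habs.ne' hxy)
  have hsign : (SignType.sign a : ℝ) ^ 2 = 1 := by
    rcases ha.lt_or_gt with h | h <;> simp [h]
  have hsubst : gaussianTail (SignType.sign a * c) = ∫⁻ σ in Ioi 0,
      ENNReal.ofReal |(|a| * -(σ ^ 2)⁻¹)| *
        ENNReal.ofReal (exp (-(|a| * σ⁻¹ - SignType.sign a * c) ^ 2 / 2)) := by
    conv_lhs => rw [gaussianTail, ← himage]
    exact lintegral_image_eq_lintegral_abs_deriv_mul measurableSet_Ioi hderiv hinj _
  rw [hsubst, ← lintegral_const_mul' _ _ ENNReal.ofReal_ne_top]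
  refine setLIntegral_congr_fun measurableSet_Ioi fun σ hσ => ?_
  rw [← ENNReal.ofReal_mul (by positivity), ← ENNReal.ofReal_mul (by positivity)]
  congr 1
  have hsq : (|a| * σ⁻¹ - SignType.sign a * c) ^ 2 = (a / σ - c) ^ 2 := by
    rw [← sign_mul_self a]
    linear_combination (a / σ - c) ^ 2 * hsign
  rw [hsq, abs_mul, abs_neg, abs_abs, abs_inv, abs_of_pos (pow_pos (mem_Ioi.mp hσ) 2)]
  field_simp

theorem lintegral_mul_gaussianTail_of_odd {E : Type*} [MeasurableSpace E] [InvolutiveNeg E]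
    [MeasurableNeg E] {μ : Measure E} [μ.IsNegInvariant] {h t : E → ℝ} (h_nonneg : ∀ u, 0 ≤ h u)
    (h_prob : ∫ u, h u ∂μ = 1) (h_symm : ∀ u, h (-u) = h u) (ht : Measurable t)
    (ht_odd : ∀ u, t (-u) = -t u) :
    ∫⁻ u, ENNReal.ofReal (h u) * gaussianTail (t u) ∂μ = ENNReal.ofReal (√(2 * π) / 2) := by
  have h_int : Integrable h μ := Integrable.of_integral_ne_zero (by simp [h_prob])
  have hmass : ∫⁻ u, ENNReal.ofReal (h u) ∂μ = 1 := by
    rw [← ofReal_integral_eq_lintegral_ofReal h_int (ae_of_all _ h_nonneg), h_prob,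
      ENNReal.ofReal_one]
  have hflip : ∫⁻ u, ENNReal.ofReal (h u) * gaussianTail (t u) ∂μ =
      ∫⁻ u, ENNReal.ofReal (h u) * gaussianTail (-t u) ∂μ := by
    rw [← lintegral_neg_eq_self]
    simp only [h_symm, ht_odd]
  have htwice : 2 * ∫⁻ u, ENNReal.ofReal (h u) * gaussianTail (t u) ∂μ =
      ENNReal.ofReal (√(2 * π)) := by
    rw [two_mul]
    nth_rw 2 [hflip]
    rw [← lintegral_add_left' (f := fun u => ENNReal.ofReal (h u) * gaussianTail (t u))
      (h_int.aemeasurable.ennreal_ofReal.mul (measurable_gaussianTail.comp ht).aemeasurable)]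
    simp_rw [← mul_add, gaussianTail_add_gaussianTail_neg]
    rw [lintegral_mul_const' _ _ ENNReal.ofReal_ne_top, hmass, one_mul]
  rw [ENNReal.ofReal_div_of_pos two_pos, ENNReal.ofReal_ofNat,
    ENNReal.eq_div_iff two_ne_zero ENNReal.ofNat_ne_top, htwice]

section ColumnSpace

variable {n k : ℕ}

def IsUnitNormal (X : Matrix (Fin n) (Fin k) ℝ) (w : Fin n → ℝ) : Prop :=
  w ⬝ᵥ w = 1 ∧ ∀ c, w ⬝ᵥ c = 0 ↔ ∃ β, X *ᵥ β = c

theorem exists_isUnitNormal (X : Matrix (Fin n) (Fin k) ℝ) (hX : X.rank + 1 = n) :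
    ∃ w, IsUnitNormal X w := by
  have hker : Module.finrank ℝ (LinearMap.ker Xᵀ.mulVecLin) = 1 := by
    have := LinearMap.finrank_range_add_finrank_ker Xᵀ.mulVecLin
    rw [← Matrix.rank, Matrix.rank_transpose, Module.finrank_fin_fun] at this
    omega
  obtain ⟨w₀, hw₀ker, hw₀⟩ := Submodule.exists_mem_ne_zero_of_ne_bot
    (Submodule.one_le_finrank_iff.mp hker.ge)
  have hw₀X : w₀ ᵥ* X = 0 := by
    rwa [LinearMap.mem_ker, Matrix.mulVecLin_apply, Matrix.mulVec_transpose] at hw₀ker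
  have hw₀w₀ : 0 < w₀ ⬝ᵥ w₀ :=
    (Finset.sum_nonneg fun i _ => mul_self_nonneg (w₀ i)).lt_of_ne'
      (dotProduct_self_eq_zero.not.mpr hw₀)
  let φ : Module.Dual ℝ (Fin n → ℝ) := dotProductBilin ℝ ℝ w₀
  have hrange : LinearMap.range X.mulVecLin = LinearMap.ker φ := by
    refine Submodule.eq_of_le_of_finrank_eq ?_ ?_
    · rintro _ ⟨β, rfl⟩
      simp [φ, Matrix.dotProduct_mulVec, hw₀X]
    · have := Module.Dual.finrank_ker_add_one_of_ne_zero (f := φ)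
        (fun h => hw₀w₀.ne' (by simpa [φ] using LinearMap.congr_fun h w₀))
      rw [Module.finrank_fin_fun] at this
      rw [← Matrix.rank]
      omega
  set s := (√(w₀ ⬝ᵥ w₀))⁻¹
  have hs : s ≠ 0 := inv_ne_zero (Real.sqrt_pos.mpr hw₀w₀).ne'
  refine ⟨s • w₀, ?_, fun c => ?_⟩
  · rw [smul_dotProduct, dotProduct_smul, smul_eq_mul, smul_eq_mul, ← mul_assoc, ← sq, inv_pow,
      Real.sq_sqrt hw₀w₀.le, inv_mul_cancel₀ hw₀w₀.ne']
  · have := SetLike.ext_iff.mp hrange c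
    simp only [LinearMap.mem_range, Matrix.mulVecLin_apply, LinearMap.mem_ker] at this
    rw [this, smul_dotProduct, smul_eq_mul, mul_eq_zero, or_iff_right hs]
    rfl

theorem Matrix.mulVec_injective_of_rank_eq {m : Type*} [Fintype m] (X : Matrix m (Fin k) ℝ)
    (hX : X.rank = k) : Function.Injective X.mulVec := by
  have := LinearMap.finrank_range_add_finrank_ker X.mulVecLin
  rw [← Matrix.rank, hX, Module.finrank_fin_fun, add_eq_left,
    Submodule.finrank_eq_zero] at this
  exact LinearMap.ker_eq_bot.mp this

theorem EuclideanSpace.norm_toLp_sq {ι : Type*} [Fintype ι] (v : ι → ℝ) :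
    ‖WithLp.toLp 2 v‖ ^ 2 = v ⬝ᵥ v := by
  rw [EuclideanSpace.norm_sq_eq]
  simp [dotProduct, sq]

noncomputable def gaussianMass (X : Matrix (Fin n) (Fin k) ℝ) : ℝ≥0∞ :=
  ∫⁻ β, ENNReal.ofReal (exp (-((X *ᵥ β) ⬝ᵥ (X *ᵥ β)) / 2))

theorem gaussianMass_lt_top (X : Matrix (Fin n) (Fin k) ℝ) (hX : X.rank = k) :
    gaussianMass X < ⊤ := by
  have hinj : Function.Injective (Matrix.toLpLin 2 2 X) := fun u v huv => by
    simpa using WithLp.ofLp_injective 2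
      (X.mulVec_injective_of_rank_eq hX (by simpa [Matrix.toLpLin_apply] using huv))
  obtain ⟨K, -, hK⟩ := (LinearMap.injective_iff_antilipschitz _).mp hinj
  set δ : ℝ := 1 / (2 * (K + 1) ^ 2)
  have hbound : ∀ β : Fin k → ℝ,
      exp (-((X *ᵥ β) ⬝ᵥ (X *ᵥ β)) / 2) ≤ ∏ i, exp (-δ * β i ^ 2) := by
    intro β
    have hnorm : ‖WithLp.toLp 2 β‖ ≤ (K + 1) * ‖WithLp.toLp 2 (X *ᵥ β)‖ := by
      have := hK.le_mul_dist (WithLp.toLp 2 β) 0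
      simp only [map_zero, dist_zero_right, Matrix.toLpLin_apply] at this
      nlinarith [norm_nonneg (WithLp.toLp 2 (X *ᵥ β))]
    have hsq : β ⬝ᵥ β ≤ (K + 1) ^ 2 * ((X *ᵥ β) ⬝ᵥ (X *ᵥ β)) := by
      rw [← EuclideanSpace.norm_toLp_sq, ← EuclideanSpace.norm_toLp_sq, ← mul_pow]
      exact pow_le_pow_left₀ (norm_nonneg _) hnorm 2
    have hsum : ∑ i, -δ * β i ^ 2 = -δ * (β ⬝ᵥ β) := by
      simp [dotProduct, Finset.mul_sum, sq]
    rw [← Real.exp_sum, Real.exp_le_exp, hsum]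
    have hK1 : (0 : ℝ) < (K + 1) ^ 2 := by positivity
    calc -((X *ᵥ β) ⬝ᵥ (X *ᵥ β)) / 2 ≤ -(β ⬝ᵥ β / (K + 1) ^ 2) / 2 := by
          gcongr
          exact (div_le_iff₀' hK1).mpr hsq
      _ = -δ * (β ⬝ᵥ β) := by simp only [δ]; field_simp
  refine lt_of_le_of_lt (lintegral_mono fun β => ENNReal.ofReal_le_ofReal (hbound β)) ?_
  exact (Integrable.fintype_prod (f := fun _ x => exp (-δ * x ^ 2))
    fun _ => integrable_exp_neg_mul_sq (by positivity)).lintegral_lt_top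

end ColumnSpace

namespace IsUnitNormal

variable {n k : ℕ} {X : Matrix (Fin n) (Fin k) ℝ} {w : Fin n → ℝ}

theorem exists_dotProduct_sub_mulVec_self (hw : IsUnitNormal X w) (c : Fin n → ℝ) :
    ∃ γ, ∀ β, (c - X *ᵥ β) ⬝ᵥ (c - X *ᵥ β) =
      (w ⬝ᵥ c) ^ 2 + (X *ᵥ (γ - β)) ⬝ᵥ (X *ᵥ (γ - β)) := by
  obtain ⟨γ, hγ⟩ := (hw.2 (c - (w ⬝ᵥ c) • w)).mp (by
    rw [dotProduct_sub, dotProduct_smul, hw.1, smul_eq_mul, mul_one, sub_self])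
  refine ⟨γ, fun β => ?_⟩
  have hperp : w ⬝ᵥ (X *ᵥ (γ - β)) = 0 := (hw.2 _).mpr ⟨_, rfl⟩
  have hdecomp : c - X *ᵥ β = (w ⬝ᵥ c) • w + X *ᵥ (γ - β) := by
    rw [Matrix.mulVec_sub, hγ]
    abel
  rw [hdecomp]
  simp only [add_dotProduct, dotProduct_add, smul_dotProduct, dotProduct_smul, hw.1, hperp,
    dotProduct_comm (X *ᵥ (γ - β)) w, smul_eq_mul]
  ring

theorem lintegral_exp_neg_dotProduct_sub_mulVec_self (hw : IsUnitNormal X w) {σ : ℝ}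
    (hσ : 0 < σ) (c : Fin n → ℝ) :
    ∫⁻ β, ENNReal.ofReal (exp (-((c - X *ᵥ β) ⬝ᵥ (c - X *ᵥ β)) / (2 * σ ^ 2))) =
      ENNReal.ofReal (σ ^ k * exp (-(w ⬝ᵥ c) ^ 2 / (2 * σ ^ 2))) * gaussianMass X := by
  obtain ⟨γ, hγ⟩ := hw.exists_dotProduct_sub_mulVec_self c
  have hscale : ∀ β, exp (-((X *ᵥ β) ⬝ᵥ (X *ᵥ β)) / (2 * σ ^ 2)) =
      exp (-((X *ᵥ (σ⁻¹ • β)) ⬝ᵥ (X *ᵥ (σ⁻¹ • β))) / 2) := fun β => by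
    simp only [Matrix.mulVec_smul, smul_dotProduct, dotProduct_smul, smul_eq_mul]
    field_simp
  simp_rw [hγ, neg_add, add_div, exp_add, ENNReal.ofReal_mul (exp_pos _).le]
  rw [lintegral_const_mul' _ _ ENNReal.ofReal_ne_top,
    lintegral_sub_left_eq_self
      (fun β => ENNReal.ofReal (exp (-((X *ᵥ β) ⬝ᵥ (X *ᵥ β)) / (2 * σ ^ 2)))) γ]
  simp_rw [hscale]
  rw [lintegral_comp_inv_smul_of_pos volume
      (fun β => ENNReal.ofReal (exp (-((X *ᵥ β) ⬝ᵥ (X *ᵥ β)) / 2))) hσ,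
    Module.finrank_fin_fun, gaussianMass,
    ENNReal.ofReal_mul (pow_pos hσ k).le]
  ring

end IsUnitNormal

section NormalModel

theorem isoNormalDensity_eq_dotProduct {n : ℕ} (y μ : Fin n → ℝ) (σ : ℝ) :
    isoNormalDensity y μ σ =
      (2 * π * σ ^ 2) ^ (-(n : ℝ) / 2) * exp (-((y - μ) ⬝ᵥ (y - μ)) / (2 * σ ^ 2)) := by
  simp [isoNormalDensity, dotProduct, sq]

theorem isoNormalDensity_nonneg {n : ℕ} (y μ : Fin n → ℝ) (σ : ℝ) : 0 ≤ isoNormalDensity y μ σ :=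
  mul_nonneg (rpow_nonneg (by positivity) _) (exp_pos _).le

theorem isoNormalDensity_add {n : ℕ} (y μ ν : Fin n → ℝ) (σ : ℝ) :
    isoNormalDensity y (μ + ν) σ = isoNormalDensity (y - ν) μ σ := by
  simp only [isoNormalDensity_eq_dotProduct, sub_add_eq_sub_sub_swap]

theorem two_pi_mul_sq_rpow_mul_pow {σ : ℝ} (hσ : 0 < σ) (k : ℕ) :
    (2 * π * σ ^ 2) ^ (-((k + 1 : ℕ) : ℝ) / 2) * σ ^ k =
      (2 * π) ^ (-((k + 1 : ℕ) : ℝ) / 2) * σ⁻¹ := by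
  rw [mul_rpow (by positivity) (by positivity), ← Real.rpow_natCast σ 2, ← rpow_mul hσ.le,
    mul_assoc, ← Real.rpow_natCast σ k, ← rpow_add hσ, ← Real.rpow_neg_one]
  congr 2
  push_cast
  ring

theorem rpow_neg_one_sub_mul_pow {σ : ℝ} (hσ : 0 < σ) (k : ℕ) :
    σ ^ (-(1 : ℝ) - k) * σ ^ k = σ⁻¹ := by
  rw [← Real.rpow_natCast, ← rpow_add hσ, sub_add_cancel, Real.rpow_neg_one]

variable {k : ℕ} {X : Matrix (Fin (k + 1)) (Fin k) ℝ} {w : Fin (k + 1) → ℝ}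

theorem IsUnitNormal.lintegral_isoNormalDensity (hw : IsUnitNormal X w) {σ : ℝ} (hσ : 0 < σ)
    (c : Fin (k + 1) → ℝ) :
    ∫⁻ β, ENNReal.ofReal (isoNormalDensity c (X *ᵥ β) σ) = gaussianMass X * ENNReal.ofReal
      ((2 * π) ^ (-((k + 1 : ℕ) : ℝ) / 2) * σ⁻¹ * exp (-((w ⬝ᵥ c) / σ) ^ 2 / 2)) := by
  have hnonneg : (0 : ℝ) ≤ (2 * π * σ ^ 2) ^ (-((k + 1 : ℕ) : ℝ) / 2) :=
    rpow_nonneg (by positivity) _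
  simp_rw [isoNormalDensity_eq_dotProduct, ENNReal.ofReal_mul hnonneg]
  rw [lintegral_const_mul' _ _ ENNReal.ofReal_ne_top,
    hw.lintegral_exp_neg_dotProduct_sub_mulVec_self hσ, ← mul_assoc,
    ← ENNReal.ofReal_mul hnonneg, mul_comm, ← mul_assoc, two_pi_mul_sq_rpow_mul_pow hσ, div_pow]
  congr 4
  ring

end NormalModel

theorem lintegral_mul_scaled_prior {kl : ℕ} (g : (Fin kl → ℝ) → ℝ≥0∞) (h : (Fin kl → ℝ) → ℝ)
    {σ : ℝ} (hσ : 0 < σ) :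
    ∫⁻ β, g β * ENNReal.ofReal (σ ^ (-(1 : ℝ) - kl) * h (σ⁻¹ • β)) =
      ∫⁻ u, g (σ • u) * ENNReal.ofReal (σ⁻¹ * h u) := by
  have := lintegral_comp_inv_smul_of_pos volume
    (fun u => g (σ • u) * ENNReal.ofReal (σ ^ (-(1 : ℝ) - kl) * h u)) hσ
  simp only [smul_inv_smul₀ hσ.ne', Module.finrank_fin_fun] at this
  rw [this, ← lintegral_const_mul' _ _ ENNReal.ofReal_ne_top]
  congr with u
  rw [mul_left_comm, ← ENNReal.ofReal_mul (pow_nonneg hσ.le _), ← mul_assoc, mul_comm (σ ^ kl),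
    rpow_neg_one_sub_mul_pow hσ]

namespace IsUnitNormal

variable {k kl : ℕ} {X : Matrix (Fin (k + 1)) (Fin k) ℝ} {w : Fin (k + 1) → ℝ}

theorem lintegral_lintegral_likelihood_mul_prior (hw : IsUnitNormal X w)
    (Xl : Matrix (Fin (k + 1)) (Fin kl) ℝ) {h : (Fin kl → ℝ) → ℝ} (h_meas : AEMeasurable h)
    (y : Fin (k + 1) → ℝ) {σ : ℝ} (hσ : 0 < σ) :
    ∫⁻ β₀, ∫⁻ β, ENNReal.ofReal (isoNormalDensity y (X *ᵥ β₀ + Xl *ᵥ β) σ *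
        (σ ^ (-(1 : ℝ) - kl) * h (σ⁻¹ • β))) =
      gaussianMass X * ENNReal.ofReal ((2 * π) ^ (-((k + 1 : ℕ) : ℝ) / 2)) *
        ∫⁻ u, ENNReal.ofReal (σ⁻¹ ^ 2 * exp (-((w ⬝ᵥ y) / σ - w ⬝ᵥ (Xl *ᵥ u)) ^ 2 / 2)) *
          ENNReal.ofReal (h u) := by
  set P := (2 * π) ^ (-((k + 1 : ℕ) : ℝ) / 2)
  have hexponent : ∀ u, (w ⬝ᵥ (y - Xl *ᵥ (σ • u))) / σ = (w ⬝ᵥ y) / σ - w ⬝ᵥ (Xl *ᵥ u) := by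
    intro u
    rw [Matrix.mulVec_smul, dotProduct_sub, dotProduct_smul, smul_eq_mul]
    field_simp
  calc _ = ∫⁻ β₀, ∫⁻ u, ENNReal.ofReal (isoNormalDensity y (X *ᵥ β₀ + Xl *ᵥ (σ • u)) σ) *
          ENNReal.ofReal (σ⁻¹ * h u) := by
        refine lintegral_congr fun β₀ => ?_
        simp_rw [ENNReal.ofReal_mul (isoNormalDensity_nonneg _ _ _)]
        exact lintegral_mul_scaled_prior _ h hσ
    _ = ∫⁻ u, ∫⁻ β₀, ENNReal.ofReal (isoNormalDensity y (X *ᵥ β₀ + Xl *ᵥ (σ • u)) σ) *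
          ENNReal.ofReal (σ⁻¹ * h u) :=
        lintegral_lintegral_swap ((by unfold isoNormalDensity; fun_prop : Measurable fun
          p : (Fin k → ℝ) × (Fin kl → ℝ) => ENNReal.ofReal
            (isoNormalDensity y (X *ᵥ p.1 + Xl *ᵥ (σ • p.2)) σ)).aemeasurable.mul
          (h_meas.comp_snd.const_mul σ⁻¹).ennreal_ofReal)
    _ = ∫⁻ u, gaussianMass X *
          ENNReal.ofReal (P * σ⁻¹ * exp (-((w ⬝ᵥ y) / σ - w ⬝ᵥ (Xl *ᵥ u)) ^ 2 / 2)) *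
          ENNReal.ofReal (σ⁻¹ * h u) := by
        refine lintegral_congr fun u => ?_
        simp_rw [isoNormalDensity_add]
        rw [lintegral_mul_const' _ _ ENNReal.ofReal_ne_top, hw.lintegral_isoNormalDensity hσ,
          hexponent]
    _ = _ := by
        have hP : 0 ≤ P := rpow_nonneg (by positivity) _
        have hmeas : AEMeasurable fun u =>
            ENNReal.ofReal (P * σ⁻¹ * exp (-((w ⬝ᵥ y) / σ - w ⬝ᵥ (Xl *ᵥ u)) ^ 2 / 2)) *
              ENNReal.ofReal (σ⁻¹ * h u) :=
          (by fun_prop : Measurable fun u => ENNReal.ofReal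
            (P * σ⁻¹ * exp (-((w ⬝ᵥ y) / σ - w ⬝ᵥ (Xl *ᵥ u)) ^ 2 / 2))).aemeasurable.mul
            (h_meas.const_mul σ⁻¹).ennreal_ofReal
        simp_rw [mul_assoc (gaussianMass X)]
        rw [lintegral_const_mul'' _ hmeas, ← lintegral_const_mul' _ _ ENNReal.ofReal_ne_top]
        congr 1
        refine lintegral_congr fun u => ?_
        rw [← ENNReal.ofReal_mul (mul_nonneg (mul_nonneg hP (inv_nonneg.mpr hσ.le)) (exp_pos _).le),
          ← ENNReal.ofReal_mul (mul_nonneg (by positivity) (exp_pos _).le),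
          ← ENNReal.ofReal_mul hP]
        congr 1
        ring

theorem marginalLikelihood_eq (hw : IsUnitNormal X w) (Xl : Matrix (Fin (k + 1)) (Fin kl) ℝ)
    {h : (Fin kl → ℝ) → ℝ} (h_nonneg : ∀ u, 0 ≤ h u) (h_prob : ∫ u, h u = 1)
    (h_symm : ∀ u, h (-u) = h u) {y : Fin (k + 1) → ℝ} (hy : w ⬝ᵥ y ≠ 0) :
    marginalLikelihood X Xl h y =
      gaussianMass X * ENNReal.ofReal ((2 * π) ^ (-((k + 1 : ℕ) : ℝ) / 2)) *
        (ENNReal.ofReal |w ⬝ᵥ y|⁻¹ * ENNReal.ofReal (√(2 * π) / 2)) := by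
  have h_meas : AEMeasurable h :=
    (Integrable.of_integral_ne_zero (by simp [h_prob])).aemeasurable
  set a := w ⬝ᵥ y
  set t : (Fin kl → ℝ) → ℝ := fun u => w ⬝ᵥ (Xl *ᵥ u)
  have hF : AEMeasurable (fun p : ℝ × (Fin kl → ℝ) =>
      ENNReal.ofReal (p.1⁻¹ ^ 2 * exp (-(a / p.1 - t p.2) ^ 2 / 2)) * ENNReal.ofReal (h p.2))
      ((volume.restrict (Ioi 0)).prod volume) :=
    (by fun_prop : Measurable fun p : ℝ × (Fin kl → ℝ) =>
      ENNReal.ofReal (p.1⁻¹ ^ 2 * exp (-(a / p.1 - t p.2) ^ 2 / 2))).aemeasurable.mul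
      h_meas.comp_snd.ennreal_ofReal
  rw [marginalLikelihood, setLIntegral_congr_fun measurableSet_Ioi fun σ hσ =>
      hw.lintegral_lintegral_likelihood_mul_prior Xl h_meas y hσ,
    lintegral_const_mul'' _ hF.lintegral_prod_right', lintegral_lintegral_swap hF]
  simp_rw [lintegral_mul_const' _ _ ENNReal.ofReal_ne_top, setLIntegral_Ioi_inv_sq_mul_exp hy]
  rw [← lintegral_mul_gaussianTail_of_odd h_nonneg h_prob h_symm
      (t := fun u => SignType.sign a * t u) (by fun_prop) fun u => by simp [t, Matrix.mulVec_neg],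
    ← lintegral_const_mul' _ _ ENNReal.ofReal_ne_top]
  congr 1
  refine lintegral_congr fun u => ?_
  ring

end IsUnitNormal

theorem nullMarginalLikelihood_eq_marginalLikelihood {n k : ℕ} (X : Matrix (Fin n) (Fin k) ℝ)
    (y : Fin n → ℝ) :
    nullMarginalLikelihood X y = marginalLikelihood X (0 : Matrix (Fin n) (Fin 0) ℝ) 1 y := by
  refine setLIntegral_congr_fun measurableSet_Ioi fun σ _ => lintegral_congr fun β₀ => ?_
  rw [Measure.volume_pi_eq_dirac 0, lintegral_dirac]
  simp [Real.rpow_neg_one]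

theorem exact_predictive_matching_minimal_sample_general
    (k0 ki kj : ℕ)
    (X0 : Matrix (Fin (k0 + 1)) (Fin k0) ℝ) (hX0 : X0.rank = k0)
    (Xi : Matrix (Fin (k0 + 1)) (Fin ki) ℝ)
    (Xj : Matrix (Fin (k0 + 1)) (Fin kj) ℝ)
    (hi : (Fin ki → ℝ) → ℝ) (hj : (Fin kj → ℝ) → ℝ)
    (hi_pos : ∀ u, 0 ≤ hi u) (hj_pos : ∀ u, 0 ≤ hj u)
    (hi_prob : ∫ u : Fin ki → ℝ, hi u = 1) (hj_prob : ∫ u : Fin kj → ℝ, hj u = 1)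
    (hi_symm : ∀ u, hi (-u) = hi u) (hj_symm : ∀ u, hj (-u) = hj u)
    (y : Fin (k0 + 1) → ℝ) (hy : ∀ β0 : Fin k0 → ℝ, X0 *ᵥ β0 ≠ y) :
    marginalLikelihood X0 Xi hi y = nullMarginalLikelihood X0 y ∧
    marginalLikelihood X0 Xj hj y = nullMarginalLikelihood X0 y ∧
    nullMarginalLikelihood X0 y < ⊤ := by
  obtain ⟨w, hw⟩ := exists_isUnitNormal X0 (by rw [hX0])
  have hwy : w ⬝ᵥ y ≠ 0 := fun hwy =>
    let ⟨β₀, hβ₀⟩ := (hw.2 y).mp hwy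
    hy β₀ hβ₀
  have hnull := (nullMarginalLikelihood_eq_marginalLikelihood X0 y).trans
    (hw.marginalLikelihood_eq 0 (fun _ => zero_le_one)
      (by rw [Measure.volume_pi_eq_dirac 0, integral_dirac]) (fun _ => rfl) hwy)
  refine ⟨(hw.marginalLikelihood_eq Xi hi_pos hi_prob hi_symm hwy).trans hnull.symm,
    (hw.marginalLikelihood_eq Xj hj_pos hj_prob hj_symm hwy).trans hnull.symm, ?_⟩
  have := gaussianMass_lt_top X0 hX0
  rw [hnull]
  finiteness

/-- Result 2 of the paper (exact predictive matching at the minimal sample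
size `n* = k₀ + 1`): all model/prior pairs, including the null model, have
identical, finite marginal densities for samples of size `k₀ + 1`. -/
theorem exact_predictive_matching_minimal_sample
    (k0 ki kj : ℕ) (hk0 : 1 ≤ k0)
    (X0 : Matrix (Fin (k0 + 1)) (Fin k0) ℝ) (hX0 : X0.rank = k0)
    (Xi : Matrix (Fin (k0 + 1)) (Fin ki) ℝ)
    (Xj : Matrix (Fin (k0 + 1)) (Fin kj) ℝ)
    (hi : (Fin ki → ℝ) → ℝ) (hj : (Fin kj → ℝ) → ℝ)
    (hi_pos : ∀ u, 0 ≤ hi u) (hj_pos : ∀ u, 0 ≤ hj u)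
    (hi_meas : Measurable hi) (hj_meas : Measurable hj)
    (hi_prob : ∫ u : Fin ki → ℝ, hi u = 1) (hj_prob : ∫ u : Fin kj → ℝ, hj u = 1)
    (hi_symm : ∀ u, hi (-u) = hi u) (hj_symm : ∀ u, hj (-u) = hj u)
    (y : Fin (k0 + 1) → ℝ) (hy : ∀ β0 : Fin k0 → ℝ, X0 *ᵥ β0 ≠ y) :
    marginalLikelihood X0 Xi hi y = nullMarginalLikelihood X0 y ∧
    marginalLikelihood X0 Xj hj y = nullMarginalLikelihood X0 y ∧
    nullMarginalLikelihood X0 y < ⊤ :=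
  exact_predictive_matching_minimal_sample_general k0 ki kj X0 hX0 Xi Xj hi hj hi_pos hj_pos hi_prob
    hj_prob hi_symm hj_symm y hy
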